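/- For every finite groupoid 𝒢 (a groupoid with finitely many objects and finite hom-sets), there exist a finite group G, a finite G-set X, and an equivalence of categories eℓ_G(X) ≃ 𝒢. -/

import Mathlib

open CategoryTheory

/-- A presentation of a groupoid `𝒢` as the category of elements (action groupoid) `eℓ_G(X)` of
a finite `G`-set `X` for some finite group `G`. -/
structure ElPresentation (𝒢 : Type) [Groupoid 𝒢] where
  /-- the finite group -/
  G : Type
  [grp : Group G]
  [finG : Fintype G]
  /-- the finite `G`-set -/
  X : Type
  [finX : Fintype X]
  [act : MulAction G X]
  /-- the equivalence of categories `eℓ_G(X) ≃ 𝒢` -/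
  equiv : ActionCategory G X ≌ 𝒢

attribute [instance] ElPresentation.grp ElPresentation.finG ElPresentation.finX
  ElPresentation.act

/-!
Replace `𝒢` by its skeleton `S`, let `G = ∏ₛ Aut s` and let `Hₛ ≅ Aut s` be the `s`-th factor.
In the action groupoid of `G` on `⨆ₛ G ⧸ Hₛ` all arrows stay inside one summand, and conjugation
by coset representatives, `g ↦ y⁻¹ g x`, identifies the arrows `xHₛ ⟶ yHₛ` with `Hₛ ≅ Aut s`,
compatibly with composition. The resulting functor to `S` is faithful, surjective on objects,
and full because `S` is skeletal.
-/

namespace QuotientGroup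

variable {G : Type*} [Group G] {K : Subgroup G}

theorem out_inv_mul_mul_out_mem {g : G} {x y : G ⧸ K} (h : g • x = y) :
    y.out⁻¹ * g * x.out ∈ K := by
  rw [mul_assoc, ← QuotientGroup.eq, out_eq', ← h]
  exact congrArg (g • ·) (out_eq' x).symm

theorem out_mul_mul_out_inv_smul {a : G} (ha : a ∈ K) (x y : G ⧸ K) :
    (y.out * a * x.out⁻¹) • x = y := by
  have h : (y.out * a * x.out⁻¹) • (x.out : G ⧸ K) = y := by
    rw [MulAction.Quotient.smul_coe, smul_eq_mul, inv_mul_cancel_right, mk_mul_of_mem _ ha,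
      out_eq']
  rwa [out_eq'] at h

end QuotientGroup

namespace CategoryTheory.ActionCategory

variable {G : Type*} [Group G] {S : Type*} (H : S → Subgroup G)

theorem back_fst_eq {p q : ActionCategory G (Σ s, G ⧸ H s)} (f : p ⟶ q) :
    p.back.1 = q.back.1 :=
  have h : (f.1 : G) • p.back = q.back := f.2
  show ((f.1 : G) • p.back).1 = q.back.1 from congrArg Sigma.fst h

noncomputable def homToSubgroup {p q : ActionCategory G (Σ s, G ⧸ H s)} (f : p ⟶ q) :
    H q.back.1 :=
  ⟨q.back.2.out⁻¹ * f.1 * p.back.2.out, by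
    rcases p with ⟨⟨⟩, s, x⟩
    rcases q with ⟨⟨⟩, t, y⟩
    obtain ⟨rfl, hxy⟩ := Sigma.mk.inj_iff.1 f.2
    exact QuotientGroup.out_inv_mul_mul_out_mem (eq_of_heq hxy)⟩

variable {H}

theorem homToSubgroup_id (p : ActionCategory G (Σ s, G ⧸ H s)) :
    homToSubgroup H (𝟙 p) = 1 := by
  ext
  change p.back.2.out⁻¹ * 1 * p.back.2.out = 1
  group

theorem homToSubgroup_comp {p q r : ActionCategory G (Σ s, G ⧸ H s)} (f : p ⟶ q) (g : q ⟶ r) :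
    (homToSubgroup H (f ≫ g) : G) = homToSubgroup H g * homToSubgroup H f := by
  simp only [homToSubgroup, ActionCategory.comp_val]
  group

theorem homToSubgroup_injective {p q : ActionCategory G (Σ s, G ⧸ H s)} :
    Function.Injective (homToSubgroup H (p := p) (q := q)) := fun _ _ hfg =>
  Subtype.ext (mul_left_cancel (mul_right_cancel (congrArg Subtype.val hfg)))

variable [Category S]

-- `Aut s` multiplies in the order of function composition, as do the arrows of an action category.
theorem hom_eq_comp_of_val_eq_mul {K : Subgroup G} {s : S} (e : K ≃* Aut s) {a b c : K}
    (h : (a : G) = c * b) : (e a).hom = (e b).hom ≫ (e c).hom :=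
  congrArg Iso.hom ((congrArg e (Subtype.ext h)).trans (map_mul e c b))

variable (H) (e : ∀ s, H s ≃* Aut s)

noncomputable def homToAut {p q : ActionCategory G (Σ s, G ⧸ H s)} (f : p ⟶ q) :
    p.back.1 ⟶ q.back.1 :=
  eqToHom (back_fst_eq H f) ≫ (e _ (homToSubgroup H f)).hom

variable {H e}

theorem homToAut_mk {s : S} {x y : G ⧸ H s}
    (f : objEquiv G _ (⟨s, x⟩ : Σ s, G ⧸ H s) ⟶ objEquiv G _ ⟨s, y⟩) :
    homToAut H e f = (e s (homToSubgroup H f)).hom :=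
  Category.id_comp _

theorem homToAut_comp {p q r : ActionCategory G (Σ s, G ⧸ H s)} (f : p ⟶ q) (g : q ⟶ r) :
    homToAut H e (f ≫ g) = homToAut H e f ≫ homToAut H e g := by
  obtain ⟨⟨s, x⟩, rfl⟩ := (objEquiv G _).surjective p
  obtain ⟨⟨t, y⟩, rfl⟩ := (objEquiv G _).surjective q
  obtain ⟨⟨u, z⟩, rfl⟩ := (objEquiv G _).surjective r
  obtain rfl : s = t := back_fst_eq H f
  obtain rfl : s = u := back_fst_eq H g
  rw [homToAut_mk, homToAut_mk, homToAut_mk]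
  exact hom_eq_comp_of_val_eq_mul (e s) (homToSubgroup_comp f g)

theorem homToAut_injective {p q : ActionCategory G (Σ s, G ⧸ H s)} :
    Function.Injective (homToAut H e (p := p) (q := q)) := fun f g hfg => by
  simp only [homToAut, cancel_epi] at hfg
  exact homToSubgroup_injective ((e _).injective (Aut.ext hfg))

theorem homToAut_surjective [IsGroupoid S] {s : S} (x y : G ⧸ H s) :
    Function.Surjective (homToAut H e (p := objEquiv G _ ⟨s, x⟩) (q := objEquiv G _ ⟨s, y⟩)) :=
  fun φ => by
    change s ⟶ s at φ
    obtain ⟨a, ha⟩ := (e s).surjective (asIso φ)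
    refine ⟨⟨y.out * a * x.out⁻¹,
      congrArg (Sigma.mk s) (QuotientGroup.out_mul_mul_out_inv_smul a.2 x y)⟩, ?_⟩
    have hval : y.out⁻¹ * (y.out * a * x.out⁻¹) * x.out = a := by group
    exact (homToAut_mk _).trans (congrArg Iso.hom ((congrArg (e s) (Subtype.ext hval)).trans ha))

variable (H e)

noncomputable def sigmaQuotientFunctor : ActionCategory G (Σ s, G ⧸ H s) ⥤ S where
  obj p := p.back.1
  map := homToAut H e
  map_id p := by
    rw [homToAut, homToSubgroup_id, map_one, eqToHom_refl, Category.id_comp]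
    rfl
  map_comp := homToAut_comp

instance : (sigmaQuotientFunctor H e).Faithful := ⟨fun hfg => homToAut_injective hfg⟩

instance : (sigmaQuotientFunctor H e).EssSurj :=
  Functor.essSurj_of_surj fun s => ⟨objEquiv G _ ⟨s, (1 : G)⟩, rfl⟩

theorem sigmaQuotientFunctor_full [IsGroupoid S] (hS : Skeletal S) :
    (sigmaQuotientFunctor H e).Full where
  map_surjective {p q} φ := by
    obtain ⟨⟨s, x⟩, rfl⟩ := (objEquiv G _).surjective p
    obtain ⟨⟨t, y⟩, rfl⟩ := (objEquiv G _).surjective q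
    change s ⟶ t at φ
    obtain rfl : s = t := hS ⟨asIso φ⟩
    exact homToAut_surjective x y φ

noncomputable def sigmaQuotientEquivOfSkeletal [IsGroupoid S] (hS : Skeletal S) :
    ActionCategory G (Σ s, G ⧸ H s) ≌ S :=
  have := sigmaQuotientFunctor_full H e hS
  have : (sigmaQuotientFunctor H e).IsEquivalence := {}
  (sigmaQuotientFunctor H e).asEquivalence

end CategoryTheory.ActionCategory

namespace CategoryTheory.Skeleton

variable (C : Type*) [Groupoid C]

instance : IsGroupoid (Skeleton C) where
  all_isIso f := isIso_of_fully_faithful (fromSkeleton C) f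

instance [Finite C] : Finite (Skeleton C) :=
  inferInstanceAs (Finite (_root_.Quotient (isIsomorphicSetoid C)))

instance [∀ a b : C, Finite (a ⟶ b)] (s : Skeleton C) : Finite (Aut s) :=
  Finite.of_injective (fun φ : Aut s => InducedCategory.homEquiv φ.hom)
    fun _ _ h => Aut.ext (InducedCategory.homEquiv.injective h)

end CategoryTheory.Skeleton

/-- **Statement 3.** Every finite groupoid (finitely many objects, finite hom-sets) is
equivalent to the category of elements `eℓ_G(X)` of a finite `G`-set `X`, for some finite
group `G`. -/
theorem exists_elPresentation (𝒢 : Type) [Groupoid 𝒢] [Fintype 𝒢]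
    [∀ a b : 𝒢, Fintype (a ⟶ b)] : Nonempty (ElPresentation 𝒢) := by
  classical
  -- The groups `Aut s` live in the universe of the hom-sets of `𝒢`; `Shrink` brings `G` to `Type`.
  let ψ (s : Skeleton 𝒢) : Aut s →* Shrink.{0} (∀ s : Skeleton 𝒢, Aut s) :=
    Shrink.mulEquiv.symm.toMonoidHom.comp (MonoidHom.mulSingle _ s)
  have hψ (s : Skeleton 𝒢) : Function.Injective (ψ s) :=
    Shrink.mulEquiv.symm.injective.comp (Pi.mulSingle_injective s)
  exact ⟨{ G := Shrink.{0} (∀ s : Skeleton 𝒢, Aut s)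
           finG := Fintype.ofFinite _
           X := Σ s, _ ⧸ (ψ s).range
           finX := Fintype.ofFinite _
           equiv := (ActionCategory.sigmaQuotientEquivOfSkeletal (fun s => (ψ s).range)
             (fun s => (MonoidHom.ofInjective (hψ s)).symm) (skeleton_skeletal 𝒢)).trans
             (skeletonEquivalence 𝒢) }⟩
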